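/- arXiv:2509.00880 — 4 statements merged into one kernel-verified Lean document; each statement's English description precedes it below -/
import Mathlib

section
/- The number of triangular lattice points contained in a closed equiangular hexagon with side lengths alternating k and k+1 (a (k, k+1)-equiangular hexagon with vertices at lattice points) is 3(k+1)². -/
/-- Triangular lattice point a•(1,0) + b•(1/2, √3/2). -/
noncomputable def tri (a b : ℤ) : ℝ × ℝ :=
  ((a : ℝ) + (b : ℝ) / 2, (b : ℝ) * Real.sqrt 3 / 2)

/-- Squared Euclidean distance in the plane. -/
def sqd (p q : ℝ × ℝ) : ℝ := (p.1 - q.1) ^ 2 + (p.2 - q.2) ^ 2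

/-- The triangular lattice. -/
noncomputable def triLattice : Set (ℝ × ℝ) := {p | ∃ a b : ℤ, p = tri a b}

/-- Closed regular hexagon of side `k` centered at the origin with a vertex at `(k,0)`. -/
noncomputable def hexR (k : ℤ) : Set (ℝ × ℝ) :=
  convexHull ℝ ({tri k 0, tri 0 k, tri (-k) k, tri (-k) 0, tri 0 (-k), tri k (-k)} : Set (ℝ × ℝ))

/-- Closed (k, k+1)-equiangular hexagon with vertices at lattice points. -/
noncomputable def hexE (k : ℤ) : Set (ℝ × ℝ) :=
  convexHull ℝ ({tri k 0, tri k (k+1), tri 0 (2*k+1), tri (-(k+1)) (2*k+1),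
    tri (-(k+1)) (k+1), tri 0 0} : Set (ℝ × ℝ))

/-- Set of squared distances between distinct points of `X`. -/
def sqdSet (X : Set (ℝ × ℝ)) : Set ℝ := {d | ∃ p ∈ X, ∃ q ∈ X, p ≠ q ∧ d = sqd p q}

/-!
In the lattice basis `tri a b ↦ (a, b)` the hexagon becomes the polygon
`-(k+1) ≤ a ≤ k`, `0 ≤ b ≤ 2k+1`, `0 ≤ a + b ≤ 2k+1`; that this polygon is the convex hull of
the six vertices follows by slicing its two trapezoids `b ≤ k+1` and `b ≥ k+1` horizontally.
Its row at height `b` holds `k+1+b` lattice points for `b ≤ k` and `3k+3-b` for `b > k`, so the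
rows `b` and `b+k+1` together hold `3(k+1)` points, and the `k+1` such pairs give `3(k+1)²`.
-/

open Set AffineMap

noncomputable def triMap : ℝ × ℝ →ₗ[ℝ] ℝ × ℝ where
  toFun p := (p.1 + p.2 / 2, p.2 * √3 / 2)
  map_add' p q := by ext <;> simp only [Prod.fst_add, Prod.snd_add] <;> ring
  map_smul' c p := by
    ext <;> simp only [Prod.smul_fst, Prod.smul_snd, smul_eq_mul, RingHom.id_apply] <;> ring

theorem tri_eq_triMap (a b : ℤ) : tri a b = triMap (a, b) := rfl

theorem triMap_injective : Function.Injective triMap := by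
  intro p q h
  have h₁ : p.1 + p.2 / 2 = q.1 + q.2 / 2 := congrArg Prod.fst h
  have h₂ : p.2 * √3 / 2 = q.2 * √3 / 2 := congrArg Prod.snd h
  have hsnd : p.2 = q.2 := by
    simpa [(Real.sqrt_pos.2 three_pos).ne'] using h₂
  exact Prod.ext (by linarith) hsnd

theorem Convex.mk_lineMap_mem {𝕜 E : Type*} [Field 𝕜] [LinearOrder 𝕜] [IsStrictOrderedRing 𝕜]
    [AddCommGroup E] [Module 𝕜 E] {s : Set (𝕜 × E)} (hs : Convex 𝕜 s) {a₀ b₀ a₁ b₁ t x : 𝕜}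
    {y₀ y₁ : E} (ha₀ : (a₀, y₀) ∈ s) (hb₀ : (b₀, y₀) ∈ s) (ha₁ : (a₁, y₁) ∈ s)
    (hb₁ : (b₁, y₁) ∈ s) (ht : t ∈ Icc 0 1) (hx : x ∈ Icc (lineMap a₀ a₁ t) (lineMap b₀ b₁ t)) :
    (x, lineMap y₀ y₁ t) ∈ s := by
  have lineMap_mk : ∀ a b : 𝕜, lineMap (a, y₀) (b, y₁) t = (lineMap a b t, lineMap y₀ y₁ t) :=
    fun a b ↦ by ext <;> simp [lineMap_apply_module]
  refine hs.segment_subset (lineMap_mk a₀ a₁ ▸ hs.lineMap_mem ha₀ ha₁ ht)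
    (lineMap_mk b₀ b₁ ▸ hs.lineMap_mem hb₀ hb₁ ht) ?_
  rw [← Prod.image_mk_segment_left, segment_eq_Icc (hx.1.trans hx.2)]
  exact mem_image_of_mem _ hx

def latticeHexagon (k : ℝ) : Set (ℝ × ℝ) :=
  {p | p.1 ∈ Icc (-(k + 1)) k ∧ p.2 ∈ Icc 0 (2 * k + 1) ∧ p.1 + p.2 ∈ Icc 0 (2 * k + 1)}

theorem convex_latticeHexagon (k : ℝ) : Convex ℝ (latticeHexagon k) :=
  ((convex_Icc _ _).linear_preimage (LinearMap.fst ℝ ℝ ℝ)).inter <|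
    ((convex_Icc _ _).linear_preimage (LinearMap.snd ℝ ℝ ℝ)).inter <|
      (convex_Icc _ _).linear_preimage (LinearMap.fst ℝ ℝ ℝ + LinearMap.snd ℝ ℝ ℝ)

def latticeHexagonVertices (k : ℝ) : Set (ℝ × ℝ) :=
  {(k, 0), (k, k + 1), (0, 2 * k + 1), (-(k + 1), 2 * k + 1), (-(k + 1), k + 1), (0, 0)}

theorem convexHull_latticeHexagonVertices {k : ℝ} (hk : 0 ≤ k) :
    convexHull ℝ (latticeHexagonVertices k) = latticeHexagon k := by
  refine subset_antisymm (convexHull_min ?_ (convex_latticeHexagon k)) ?_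
  · simp only [latticeHexagonVertices, insert_subset_iff, singleton_subset_iff, latticeHexagon,
      mem_ofPred_eq, mem_Icc]
    refine ⟨?_, ?_, ?_, ?_, ?_, ?_⟩ <;> refine ⟨⟨?_, ?_⟩, ⟨?_, ?_⟩, ⟨?_, ?_⟩⟩ <;> linarith
  rintro ⟨x, y⟩ ⟨⟨hx₀, hx₁⟩, ⟨hy₀, hy₁⟩, ⟨hxy₀, hxy₁⟩⟩
  have hconv := convex_convexHull ℝ (latticeHexagonVertices k)
  have mem_hull := subset_convexHull ℝ (latticeHexagonVertices k)
  simp only [latticeHexagonVertices, insert_subset_iff, singleton_subset_iff] at mem_hull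
  obtain ⟨v₁, v₂, v₃, v₄, v₅, v₆⟩ := mem_hull
  rcases le_or_gt y (k + 1) with hy | hy
  · set t := y / (k + 1)
    have hty : t * (k + 1) = y := div_mul_cancel₀ _ (by positivity)
    have ht : t ∈ Icc 0 1 := ⟨by positivity, div_le_one_of_le₀ hy (by positivity)⟩
    have hyt : y = lineMap 0 (k + 1) t := by rw [lineMap_apply_ring']; linarith
    rw [hyt]
    refine hconv.mk_lineMap_mem v₆ v₁ v₅ v₂ ht ?_
    simp only [lineMap_apply_ring', mem_Icc]
    constructor <;> linarith
  · have hk : 0 < k := by linarith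
    set t := (y - (k + 1)) / k
    have hty : t * k = y - (k + 1) := div_mul_cancel₀ _ hk.ne'
    have ht : t ∈ Icc 0 1 :=
      ⟨div_nonneg (by linarith) hk.le, div_le_one_of_le₀ (by linarith) hk.le⟩
    have hyt : y = lineMap (k + 1) (2 * k + 1) t := by rw [lineMap_apply_ring']; linarith
    rw [hyt]
    refine hconv.mk_lineMap_mem v₅ v₂ v₄ v₃ ht ?_
    simp only [lineMap_apply_ring', mem_Icc]
    constructor <;> linarith

theorem hexE_eq_image_triMap (k : ℕ) : hexE k = triMap '' latticeHexagon k := by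
  rw [← convexHull_latticeHexagonVertices k.cast_nonneg, LinearMap.image_convexHull]
  simp only [hexE, latticeHexagonVertices, image_insert_eq, image_singleton, tri_eq_triMap]
  push_cast
  rfl

theorem tri_injective : Function.Injective fun q : ℤ × ℤ ↦ tri q.1 q.2 := by
  intro p q h
  have h' : triMap (p.1, p.2) = triMap (q.1, q.2) := h
  replace h' := triMap_injective h'
  simp only [Prod.mk.injEq, Int.cast_inj] at h'
  exact Prod.ext h'.1 h'.2

noncomputable def hexagonRow (k b : ℕ) : Finset ℤ :=
  Finset.Icc (max (-((k : ℤ) + 1)) (-b)) (min (k : ℤ) (2 * k + 1 - b))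

noncomputable def hexagonPoints (k : ℕ) : Finset (ℤ × ℤ) :=
  (Finset.range (2 * k + 2)).biUnion fun b ↦ (hexagonRow k b).map (.sectL ℤ (b : ℤ))

theorem mem_hexagonPoints {k : ℕ} {a b : ℤ} :
    (a, b) ∈ hexagonPoints k ↔
      a ∈ Icc (-((k : ℤ) + 1)) k ∧ b ∈ Icc 0 (2 * (k : ℤ) + 1) ∧
        a + b ∈ Icc 0 (2 * (k : ℤ) + 1) := by
  simp only [hexagonPoints, hexagonRow, Finset.mem_biUnion, Finset.mem_map, Finset.mem_Icc,
    Finset.mem_range, Function.Embedding.sectL_apply, Prod.mk.injEq, mem_Icc, max_le_iff,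
    le_min_iff]
  constructor
  · rintro ⟨b, hb, a, ha, rfl, rfl⟩
    omega
  · intro h
    exact ⟨b.toNat, by omega, a, by omega, rfl, by omega⟩

theorem tri_mem_hexE_iff {k : ℕ} {a b : ℤ} : tri a b ∈ hexE k ↔ (a, b) ∈ hexagonPoints k := by
  rw [hexE_eq_image_triMap, tri_eq_triMap, triMap_injective.mem_set_image, mem_hexagonPoints]
  simp only [latticeHexagon, mem_ofPred_eq, mem_Icc]
  norm_cast

theorem card_hexagonRow_add_card_hexagonRow {k b : ℕ} (hb : b ≤ k) :
    (hexagonRow k b).card + (hexagonRow k (k + 1 + b)).card = 3 * (k + 1) := by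
  simp only [hexagonRow, Int.card_Icc]
  omega

theorem card_hexagonPoints (k : ℕ) : (hexagonPoints k).card = 3 * (k + 1) ^ 2 := by
  rw [hexagonPoints, Finset.card_biUnion]
  · simp only [Finset.card_map]
    rw [show 2 * k + 2 = (k + 1) + (k + 1) by ring, Finset.sum_range_add, ← Finset.sum_add_distrib,
      Finset.sum_congr rfl fun b hb ↦ card_hexagonRow_add_card_hexagonRow
        (Finset.mem_range_succ_iff.mp hb)]
    simp only [Finset.sum_const, Finset.card_range, smul_eq_mul, Nat.succ_eq_add_one]
    ring
  · intro b _ b' _ hbb'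
    simp only [Finset.disjoint_left, Finset.mem_map, Function.Embedding.sectL_apply]
    rintro _ ⟨a, -, rfl⟩ ⟨a', -, h⟩
    exact hbb' (by simpa using (Prod.mk.inj h).2.symm)

theorem equiangular_hexagon_lattice_count (k : ℕ) :
    (triLattice ∩ hexE (k : ℤ)).ncard = 3 * (k + 1) ^ 2 := by
  have lattice_points :
      triLattice ∩ hexE k = (fun q : ℤ × ℤ ↦ tri q.1 q.2) '' hexagonPoints k := by
    ext p
    constructor
    · rintro ⟨⟨a, b, rfl⟩, hp⟩
      exact ⟨(a, b), tri_mem_hexE_iff.1 hp, rfl⟩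
    · rintro ⟨⟨a, b⟩, hq, rfl⟩
      exact ⟨⟨a, b, rfl⟩, tri_mem_hexE_iff.2 hq⟩
  rw [lattice_points, ncard_image_of_injective _ tri_injective, ncard_coe_finset,
    card_hexagonPoints]
end

section
/- Removing three pairwise non-adjacent corner vertices from the 19 triangular lattice points of the regular hexagon of side length 2 yields a 16-point set whose set of squared pairwise distances is exactly {1, 3, 4, 7, 9, 12, 13}, i.e., a 7-distance set. -/
lemma tri_inj {a b c d : ℤ} (h : tri a b = tri c d) : a = c ∧ b = d := by
  have h3 : Real.sqrt 3 ≠ 0 := by positivity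
  have h1 := congrArg Prod.fst h
  have h2 := congrArg Prod.snd h
  simp only [tri] at h1 h2
  have hb : (b : ℝ) = d := by
    field_simp [h3] at h2
    exact_mod_cast h2
  have ha : (a : ℝ) = c := by rw [hb] at h1; linarith
  exact ⟨by exact_mod_cast ha, by exact_mod_cast hb⟩

lemma sqd_tri (a b c d : ℤ) :
    sqd (tri a b) (tri c d) = (((a-c)^2 + (a-c)*(b-d) + (b-d)^2 : ℤ) : ℝ) := by
  have h : Real.sqrt 3 ^ 2 = 3 := Real.sq_sqrt (by norm_num)
  simp only [sqd, tri]
  push_cast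
  linear_combination (((b:ℝ)-d)^2/4) * h

lemma hex_halfplane (c₁ c₂ : ℝ)
    (h : ∀ v ∈ ({tri 2 0, tri 0 2, tri (-2) 2, tri (-2) 0, tri 0 (-2), tri 2 (-2)} : Set (ℝ × ℝ)),
      c₁ * v.1 + c₂ * v.2 ≤ 2 * Real.sqrt 3) :
    ∀ p ∈ hexR 2, c₁ * p.1 + c₂ * p.2 ≤ 2 * Real.sqrt 3 := by
  intro p hp
  have hlin : IsLinearMap ℝ (fun p : ℝ × ℝ => c₁ * p.1 + c₂ * p.2) := by
    constructor
    · intro x y; simp [Prod.fst_add, Prod.snd_add]; ring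
    · intro c x; simp [Prod.smul_fst, Prod.smul_snd, smul_eq_mul]; ring
  have := convexHull_min (s := ({tri 2 0, tri 0 2, tri (-2) 2, tri (-2) 0, tri 0 (-2), tri 2 (-2)} : Set (ℝ × ℝ)))
    (t := {w | c₁ * w.1 + c₂ * w.2 ≤ 2 * Real.sqrt 3}) h (convex_halfSpace_le hlin _)
  exact this hp

lemma hex_bounds (a b : ℤ) (h : tri a b ∈ hexR 2) :
    -2 ≤ a ∧ a ≤ 2 ∧ -2 ≤ b ∧ b ≤ 2 ∧ -2 ≤ a + b ∧ a + b ≤ 2 := by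
  have s3 : (0:ℝ) < Real.sqrt 3 := by positivity
  have key : ∀ c₁ c₂ : ℝ,
      (∀ v ∈ ({tri 2 0, tri 0 2, tri (-2) 2, tri (-2) 0, tri 0 (-2), tri 2 (-2)} : Set (ℝ × ℝ)),
        c₁ * v.1 + c₂ * v.2 ≤ 2 * Real.sqrt 3) →
      c₁ * (tri a b).1 + c₂ * (tri a b).2 ≤ 2 * Real.sqrt 3 :=
    fun c₁ c₂ hh => hex_halfplane c₁ c₂ hh _ h
  have tac : ∀ v ∈ ({tri 2 0, tri 0 2, tri (-2) 2, tri (-2) 0, tri 0 (-2), tri 2 (-2)} : Set (ℝ × ℝ)), True := by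
    intro v hv; trivial
  have H1 := key (Real.sqrt 3) (-1) (by
    intro v hv
    simp only [Set.mem_insert_iff, Set.mem_singleton_iff] at hv
    rcases hv with rfl|rfl|rfl|rfl|rfl|rfl <;> simp [tri] <;> nlinarith [s3])
  have H2 := key (-Real.sqrt 3) 1 (by
    intro v hv
    simp only [Set.mem_insert_iff, Set.mem_singleton_iff] at hv
    rcases hv with rfl|rfl|rfl|rfl|rfl|rfl <;> simp [tri] <;> nlinarith [s3])
  have H3 := key 0 2 (by
    intro v hv
    simp only [Set.mem_insert_iff, Set.mem_singleton_iff] at hv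
    rcases hv with rfl|rfl|rfl|rfl|rfl|rfl <;> simp [tri] <;> nlinarith [s3])
  have H4 := key 0 (-2) (by
    intro v hv
    simp only [Set.mem_insert_iff, Set.mem_singleton_iff] at hv
    rcases hv with rfl|rfl|rfl|rfl|rfl|rfl <;> simp [tri] <;> nlinarith [s3])
  have H5 := key (Real.sqrt 3) 1 (by
    intro v hv
    simp only [Set.mem_insert_iff, Set.mem_singleton_iff] at hv
    rcases hv with rfl|rfl|rfl|rfl|rfl|rfl <;> simp [tri] <;> nlinarith [s3])
  have H6 := key (-Real.sqrt 3) (-1) (by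
    intro v hv
    simp only [Set.mem_insert_iff, Set.mem_singleton_iff] at hv
    rcases hv with rfl|rfl|rfl|rfl|rfl|rfl <;> simp [tri] <;> nlinarith [s3])
  simp only [tri] at H1 H2 H3 H4 H5 H6
  have ha2 : (a:ℝ) ≤ 2 := by nlinarith [s3, H1]
  have ha1 : (-2:ℝ) ≤ (a:ℝ) := by nlinarith [s3, H2]
  have hb2 : (b:ℝ) ≤ 2 := by nlinarith [s3, H3]
  have hb1 : (-2:ℝ) ≤ (b:ℝ) := by nlinarith [s3, H4]
  have hc2 : (a:ℝ) + b ≤ 2 := by nlinarith [s3, H5]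
  have hc1 : (-2:ℝ) ≤ (a:ℝ) + b := by nlinarith [s3, H6]
  exact ⟨by exact_mod_cast ha1, by exact_mod_cast ha2, by exact_mod_cast hb1,
    by exact_mod_cast hb2, by exact_mod_cast hc1, by exact_mod_cast hc2⟩

lemma half_tri (a b c d e f : ℤ) (h1 : a + c = 2*e) (h2 : b + d = 2*f) :
    (1/2 : ℝ) • tri a b + (1/2 : ℝ) • tri c d = tri e f := by
  have h1' : (a:ℝ) + c = 2*e := by exact_mod_cast h1
  have h2' : (b:ℝ) + d = 2*f := by exact_mod_cast h2
  simp only [tri, Prod.smul_mk, Prod.mk_add_mk, smul_eq_mul]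
  refine Prod.ext ?_ ?_
  · dsimp only; linarith
  · dsimp only; linear_combination (Real.sqrt 3 / 4) * h2'

lemma hex_mid {p q : ℝ × ℝ} (hp : p ∈ hexR 2) (hq : q ∈ hexR 2) :
    (1/2 : ℝ) • p + (1/2 : ℝ) • q ∈ hexR 2 :=
  (convex_convexHull ℝ _) hp hq (by norm_num) (by norm_num) (by norm_num)

lemma hex_vert (a b : ℤ)
    (h : (a, b) ∈ ({(2,0),(0,2),(-2,2),(-2,0),(0,-2),(2,-2)} : Finset (ℤ × ℤ))) :
    tri a b ∈ hexR 2 := by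
  apply subset_convexHull ℝ _
  fin_cases h <;> simp [Set.mem_insert_iff]

lemma hex_mem16 (a b : ℤ)
    (h : (a, b) ∈ ({(1,-2),(2,-2),(-1,-1),(0,-1),(1,-1),(2,-1),(-2,0),(-1,0),(0,0),(1,0),
      (-2,1),(-1,1),(0,1),(1,1),(-1,2),(0,2)} : Finset (ℤ × ℤ))) :
    tri a b ∈ hexR 2 := by
  have A : tri 2 0 ∈ hexR 2 := hex_vert 2 0 (by decide)
  have B : tri 0 2 ∈ hexR 2 := hex_vert 0 2 (by decide)
  have C : tri (-2) 2 ∈ hexR 2 := hex_vert (-2) 2 (by decide)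
  have D : tri (-2) 0 ∈ hexR 2 := hex_vert (-2) 0 (by decide)
  have E : tri 0 (-2) ∈ hexR 2 := hex_vert 0 (-2) (by decide)
  have F : tri 2 (-2) ∈ hexR 2 := hex_vert 2 (-2) (by decide)
  fin_cases h
  · rw [← half_tri 0 (-2) 2 (-2) 1 (-2) (by ring) (by ring)]; exact hex_mid E F
  · exact F
  · rw [← half_tri (-2) 0 0 (-2) (-1) (-1) (by ring) (by ring)]; exact hex_mid D E
  · rw [← half_tri (-2) 0 2 (-2) 0 (-1) (by ring) (by ring)]; exact hex_mid D F
  · rw [← half_tri 2 0 0 (-2) 1 (-1) (by ring) (by ring)]; exact hex_mid A E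
  · rw [← half_tri 2 (-2) 2 0 2 (-1) (by ring) (by ring)]; exact hex_mid F A
  · exact D
  · rw [← half_tri (-2) 2 0 (-2) (-1) 0 (by ring) (by ring)]; exact hex_mid C E
  · rw [← half_tri 2 0 (-2) 0 0 0 (by ring) (by ring)]; exact hex_mid A D
  · rw [← half_tri 0 2 2 (-2) 1 0 (by ring) (by ring)]; exact hex_mid B F
  · rw [← half_tri (-2) 2 (-2) 0 (-2) 1 (by ring) (by ring)]; exact hex_mid C D
  · rw [← half_tri 0 2 (-2) 0 (-1) 1 (by ring) (by ring)]; exact hex_mid B D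
  · rw [← half_tri 2 0 (-2) 2 0 1 (by ring) (by ring)]; exact hex_mid A C
  · rw [← half_tri 2 0 0 2 1 1 (by ring) (by ring)]; exact hex_mid A B
  · rw [← half_tri 0 2 (-2) 2 (-1) 2 (by ring) (by ring)]; exact hex_mid B C
  · exact B

def P16 : Finset (ℤ × ℤ) :=
  {(1,-2),(2,-2),(-1,-1),(0,-1),(1,-1),(2,-1),(-2,0),(-1,0),(0,0),(1,0),
    (-2,1),(-1,1),(0,1),(1,1),(-1,2),(0,2)}


theorem hexagon_side2_minus_three_corners_seven_distance :
    ((triLattice ∩ hexR 2) \ {tri 2 0, tri (-2) 2, tri 0 (-2)}).ncard = 16 ∧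
      sqdSet ((triLattice ∩ hexR 2) \ {tri 2 0, tri (-2) 2, tri 0 (-2)}) =
        {1, 3, 4, 7, 9, 12, 13} := by
  have hEq : ((triLattice ∩ hexR 2) \ {tri 2 0, tri (-2) 2, tri 0 (-2)}) =
      (fun q : ℤ × ℤ => tri q.1 q.2) '' ↑P16 := by
    ext p
    constructor
    · rintro ⟨⟨⟨a, b, rfl⟩, hhex⟩, hnot⟩
      have hb := hex_bounds a b hhex
      simp only [Set.mem_insert_iff, Set.mem_singleton_iff, not_or] at hnot
      obtain ⟨h1, h2, h3⟩ := hnot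
      have n1 : ¬(a = 2 ∧ b = 0) := fun ⟨ha, hb⟩ => h1 (by rw [ha, hb])
      have n2 : ¬(a = -2 ∧ b = 2) := fun ⟨ha, hb⟩ => h2 (by rw [ha, hb])
      have n3 : ¬(a = 0 ∧ b = -2) := fun ⟨ha, hb⟩ => h3 (by rw [ha, hb])
      simp only [Set.mem_image, Finset.mem_coe]
      refine ⟨(a, b), ?_, rfl⟩
      obtain ⟨b1, b2, b3, b4, b5, b6⟩ := hb
      interval_cases a <;> interval_cases b <;> first | (exfalso; omega) | decide
    · intro hp
      simp only [Set.mem_image, Finset.mem_coe] at hp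
      obtain ⟨⟨a, b⟩, hab, rfl⟩ := hp
      refine ⟨⟨⟨a, b, rfl⟩, hex_mem16 a b hab⟩, ?_⟩
      simp only [Set.mem_insert_iff, Set.mem_singleton_iff, not_or]
      refine ⟨fun h => ?_, fun h => ?_, fun h => ?_⟩ <;>
        · obtain ⟨ha, hb⟩ := tri_inj h
          subst ha; subst hb
          exact absurd hab (by decide)
  have hinj : Function.Injective (fun q : ℤ × ℤ => tri q.1 q.2) := by
    intro u v h
    have := tri_inj h
    exact Prod.ext this.1 this.2
  constructor
  · rw [hEq, Set.ncard_image_of_injective _ hinj, Set.ncard_coe_finset]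
    decide
  · have memS : ∀ a b : ℤ, (a, b) ∈ P16 →
        tri a b ∈ ((triLattice ∩ hexR 2) \ {tri 2 0, tri (-2) 2, tri 0 (-2)}) := by
      intro a b h
      rw [hEq]
      simp only [Set.mem_image, Finset.mem_coe]
      exact ⟨(a, b), h, rfl⟩
    have key : ∀ u ∈ P16, ∀ v ∈ P16, u ≠ v →
        ((u.1 - v.1)^2 + (u.1 - v.1) * (u.2 - v.2) + (u.2 - v.2)^2) ∈
          ({1, 3, 4, 7, 9, 12, 13} : Finset ℤ) := by decide
    ext d
    constructor
    · rintro ⟨p, hp, q, hq, hpq, rfl⟩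
      rw [hEq] at hp hq
      simp only [Set.mem_image, Finset.mem_coe] at hp hq
      obtain ⟨u, hu, rfl⟩ := hp
      obtain ⟨v, hv, rfl⟩ := hq
      have hne : u ≠ v := by rintro rfl; exact hpq rfl
      have hk := key u hu v hv hne
      rw [sqd_tri]
      simp only [Finset.mem_insert, Finset.mem_singleton] at hk
      simp only [Set.mem_insert_iff, Set.mem_singleton_iff]
      rcases hk with h | h | h | h | h | h | h <;> rw [h] <;> norm_num
    · intro hd
      simp only [Set.mem_insert_iff, Set.mem_singleton_iff] at hd
      rcases hd with rfl | rfl | rfl | rfl | rfl | rfl | rfl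
      · exact ⟨tri 0 0, memS 0 0 (by decide), tri 1 0, memS 1 0 (by decide),
          fun h => by have := tri_inj h; omega, by rw [sqd_tri]; norm_num⟩
      · exact ⟨tri 1 1, memS 1 1 (by decide), tri 0 0, memS 0 0 (by decide),
          fun h => by have := tri_inj h; omega, by rw [sqd_tri]; norm_num⟩
      · exact ⟨tri (-2) 0, memS (-2) 0 (by decide), tri 0 0, memS 0 0 (by decide),
          fun h => by have := tri_inj h; omega, by rw [sqd_tri]; norm_num⟩
      · exact ⟨tri 1 1, memS 1 1 (by decide), tri 0 (-1), memS 0 (-1) (by decide),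
          fun h => by have := tri_inj h; omega, by rw [sqd_tri]; norm_num⟩
      · exact ⟨tri (-2) 0, memS (-2) 0 (by decide), tri 1 0, memS 1 0 (by decide),
          fun h => by have := tri_inj h; omega, by rw [sqd_tri]; norm_num⟩
      · exact ⟨tri 1 1, memS 1 1 (by decide), tri (-1) (-1), memS (-1) (-1) (by decide),
          fun h => by have := tri_inj h; omega, by rw [sqd_tri]; norm_num⟩
      · exact ⟨tri 1 1, memS 1 1 (by decide), tri (-2) 0, memS (-2) 0 (by decide),
          fun h => by have := tri_inj h; omega, by rw [sqd_tri]; norm_num⟩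
end

section
/- The 61 triangular lattice points in a closed regular hexagon of side length 4 form a 23-distance set whose squared distance set contains 64 but contains neither 61 nor 63; in particular its 23 distances are not the 23 smallest distances occurring in the triangular lattice. -/
/-!
In lattice coordinates `(x, y)`, i.e. for the point `x • (1, 0) + y • (1/2, √3/2)`, the hexagon
`hexR k` is the polytope `|x|, |y|, |x + y| ≤ k`, and the squared distance between two lattice points
is `x² + xy + y²` evaluated at their difference. Differences of lattice points of the side-`k`
hexagon are exactly the lattice points of the side-`2k` hexagon, so the squared distances of the
side-`4` configuration are the values of `x² + xy + y²` at the nonzero lattice points of the side-`8`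
hexagon, a finite computation.
-/

theorem mem_convexHull_of_triangle {E : Type*} [AddCommGroup E] [Module ℝ E] {s : Set E}
    {u v w p : E} (hu : u ∈ s) (hv : v ∈ s) (hw : w ∈ s) {a b c : ℝ}
    (ha : 0 ≤ a) (hb : 0 ≤ b) (hc : 0 ≤ c) (hsum : 0 < a + b + c)
    (hp : a • u + b • v + c • w = (a + b + c) • p) : p ∈ convexHull ℝ s := by
  have hmem := Finset.univ.centerMass_mem_convexHull (w := ![a, b, c]) (z := ![u, v, w])
    (by intro i _; fin_cases i <;> assumption) (by simpa [Fin.sum_univ_three] using hsum)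
    (by intro i _; fin_cases i <;> assumption)
  simp only [Finset.centerMass, Fin.sum_univ_three, Matrix.cons_val_zero, Matrix.cons_val_one,
    Matrix.cons_val_two, Matrix.head_cons, Matrix.tail_cons, hp, smul_smul] at hmem
  rwa [inv_mul_cancel₀ hsum.ne', one_smul] at hmem

/-- The vertices of `hexR k`, in lattice coordinates. -/
def hexagonVertices (k : ℝ) : Set (ℝ × ℝ) := {(k, 0), (0, k), (-k, k), (-k, 0), (0, -k), (k, -k)}

section Hexagon

variable {k : ℝ}

theorem convexHull_hexagon_subset (hk : 0 ≤ k) :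
    convexHull ℝ (hexagonVertices k) ⊆
      {p : ℝ × ℝ | |p.1| ≤ k ∧ |p.2| ≤ k ∧ |p.1 + p.2| ≤ k} := by
  refine convexHull_min ?_ ?_
  · intro p hp
    simp only [hexagonVertices, Set.mem_insert_iff, Set.mem_singleton_iff] at hp
    rcases hp with rfl | rfl | rfl | rfl | rfl | rfl <;> simp [abs_le, hk]
  · intro p hp q hq a b ha hb hab
    simp only [Set.mem_ofPred_eq, abs_le, Prod.fst_add, Prod.snd_add, Prod.smul_fst,
      Prod.smul_snd, smul_eq_mul] at hp hq ⊢
    obtain ⟨⟨hp1, hp1'⟩, ⟨hp2, hp2'⟩, ⟨hp3, hp3'⟩⟩ := hp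
    obtain ⟨⟨hq1, hq1'⟩, ⟨hq2, hq2'⟩, ⟨hq3, hq3'⟩⟩ := hq
    refine ⟨⟨?_, ?_⟩, ⟨?_, ?_⟩, ⟨?_, ?_⟩⟩ <;> nlinarith

theorem subset_convexHull_hexagon (hk : 0 ≤ k) :
    {p : ℝ × ℝ | |p.1| ≤ k ∧ |p.2| ≤ k ∧ |p.1 + p.2| ≤ k} ⊆
      convexHull ℝ (hexagonVertices k) := by
  unfold hexagonVertices
  rintro ⟨x, y⟩ ⟨hx, hy, hxy⟩
  rw [abs_le] at hx hy hxy
  rcases hk.eq_or_lt with rfl | hk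
  · obtain ⟨rfl, rfl⟩ : x = 0 ∧ y = 0 := ⟨by linarith, by linarith⟩
    exact subset_convexHull ℝ _ (by simp)
  -- each sector cut out by the signs of `x`, `y`, `x + y` lies in a triangle of vertices, and
  -- `a, b, c` are barycentric coordinates there, scaled by `2 * k`
  rcases le_or_gt 0 x with hx0 | hx0 <;> rcases le_or_gt 0 y with hy0 | hy0
  · exact mem_convexHull_of_triangle (u := (k, 0)) (v := (0, k)) (w := (-k, 0))
      (a := k + x - y) (b := 2 * y) (c := k - x - y) (by simp) (by simp) (by simp)
      (by linarith) (by linarith) (by linarith) (by linarith) (by ext <;> simp <;> ring)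
  · rcases le_or_gt 0 (x + y) with hxy0 | hxy0
    · exact mem_convexHull_of_triangle (u := (k, 0)) (v := (k, -k)) (w := (-k, 0))
        (a := k + x + 2 * y) (b := -2 * y) (c := k - x) (by simp) (by simp) (by simp)
        (by linarith) (by linarith) (by linarith) (by linarith) (by ext <;> simp <;> ring)
    · exact mem_convexHull_of_triangle (u := (k, -k)) (v := (0, -k)) (w := (0, k))
        (a := 2 * x) (b := k - 2 * x - y) (c := k + y) (by simp) (by simp) (by simp)
        (by linarith) (by linarith) (by linarith) (by linarith) (by ext <;> simp <;> ring)
  · rcases le_or_gt 0 (x + y) with hxy0 | hxy0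
    · exact mem_convexHull_of_triangle (u := (0, k)) (v := (-k, k)) (w := (0, -k))
        (a := k + 2 * x + y) (b := -2 * x) (c := k - y) (by simp) (by simp) (by simp)
        (by linarith) (by linarith) (by linarith) (by linarith) (by ext <;> simp <;> ring)
    · exact mem_convexHull_of_triangle (u := (-k, k)) (v := (-k, 0)) (w := (k, 0))
        (a := 2 * y) (b := k - x - 2 * y) (c := k + x) (by simp) (by simp) (by simp)
        (by linarith) (by linarith) (by linarith) (by linarith) (by ext <;> simp <;> ring)
  · exact mem_convexHull_of_triangle (u := (-k, 0)) (v := (0, -k)) (w := (k, 0))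
      (a := k - x + y) (b := -2 * y) (c := k + x + y) (by simp) (by simp) (by simp)
      (by linarith) (by linarith) (by linarith) (by linarith) (by ext <;> simp <;> ring)

theorem convexHull_hexagon (hk : 0 ≤ k) :
    convexHull ℝ (hexagonVertices k) =
      {p : ℝ × ℝ | |p.1| ≤ k ∧ |p.2| ≤ k ∧ |p.1 + p.2| ≤ k} :=
  (convexHull_hexagon_subset hk).antisymm (subset_convexHull_hexagon hk)

end Hexagon

noncomputable def triLinear : ℝ × ℝ →ₗ[ℝ] ℝ × ℝ where
  toFun p := (p.1 + p.2 / 2, p.2 * Real.sqrt 3 / 2)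
  map_add' p q := by ext <;> simp <;> ring
  map_smul' c p := by ext <;> simp <;> ring

theorem tri_eq_triLinear (a b : ℤ) : tri a b = triLinear (a, b) := rfl

theorem triLinear_injective : Function.Injective triLinear := by
  rintro ⟨x, y⟩ ⟨x', y'⟩ h
  simp only [triLinear, LinearMap.coe_mk, AddHom.coe_mk, Prod.mk.injEq] at h
  obtain rfl : y = y' := by simpa using h.2
  simpa using h.1

theorem hexR_eq_image (k : ℤ) :
    hexR k = triLinear '' convexHull ℝ (hexagonVertices k) := by
  rw [LinearMap.image_convexHull, hexR, hexagonVertices]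
  simp only [Set.image_insert_eq, Set.image_singleton, tri_eq_triLinear, Int.cast_neg, Int.cast_zero]

theorem tri_mem_hexR_iff {k : ℤ} (hk : 0 ≤ k) {a b : ℤ} :
    tri a b ∈ hexR k ↔ |a| ≤ k ∧ |b| ≤ k ∧ |a + b| ≤ k := by
  rw [hexR_eq_image, tri_eq_triLinear, triLinear_injective.mem_set_image,
    convexHull_hexagon (by exact_mod_cast hk)]
  simp only [Set.mem_ofPred_eq]
  norm_cast

def triNormSq (p : ℤ × ℤ) : ℤ := p.1 ^ 2 + p.1 * p.2 + p.2 ^ 2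

theorem sqd_uncurry_tri (p q : ℤ × ℤ) :
    sqd (Function.uncurry tri p) (Function.uncurry tri q) = triNormSq (p - q) := by
  obtain ⟨a, b⟩ := p
  obtain ⟨c, d⟩ := q
  simp only [sqd, Function.uncurry_apply_pair, tri, triNormSq, Prod.mk_sub_mk]
  push_cast
  linear_combination ((b - d : ℝ) ^ 2 / 4) * Real.sq_sqrt (show (0 : ℝ) ≤ 3 by norm_num)

theorem tri_injective_s8 : Function.Injective (Function.uncurry tri) := by
  rintro ⟨a, b⟩ ⟨c, d⟩ h
  simpa using triLinear_injective (a₁ := (a, b)) (a₂ := (c, d)) h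

open Pointwise in
theorem sqdSet_image_tri (P : Set (ℤ × ℤ)) :
    sqdSet (Function.uncurry tri '' P) = (fun d => (triNormSq d : ℝ)) '' ((P - P) \ {0}) := by
  ext r
  simp only [sqdSet, Set.mem_ofPred_eq, Set.mem_image, Set.mem_sdiff, Set.mem_sub,
    Set.mem_singleton_iff]
  constructor
  · rintro ⟨_, ⟨p, hp, rfl⟩, _, ⟨q, hq, rfl⟩, hpq, rfl⟩
    refine ⟨p - q, ⟨⟨p, hp, q, hq, rfl⟩, sub_ne_zero.mpr (ne_of_apply_ne _ hpq)⟩, ?_⟩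
    exact (sqd_uncurry_tri p q).symm
  · rintro ⟨_, ⟨⟨p, hp, q, hq, rfl⟩, hpq⟩, rfl⟩
    refine ⟨_, ⟨p, hp, rfl⟩, _, ⟨q, hq, rfl⟩, tri_injective_s8.ne (sub_ne_zero.mp hpq), ?_⟩
    exact (sqd_uncurry_tri p q).symm

noncomputable def hexPoints (k : ℤ) : Finset (ℤ × ℤ) :=
  (Finset.Icc (-k) k ×ˢ Finset.Icc (-k) k).filter (fun p => |p.1 + p.2| ≤ k)

theorem mem_hexPoints {k : ℤ} {p : ℤ × ℤ} :
    p ∈ hexPoints k ↔ |p.1| ≤ k ∧ |p.2| ≤ k ∧ |p.1 + p.2| ≤ k := by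
  simp [hexPoints, abs_le, and_assoc]

theorem triLattice_inter_hexR {k : ℤ} (hk : 0 ≤ k) :
    triLattice ∩ hexR k = Function.uncurry tri '' hexPoints k := by
  ext x
  constructor
  · rintro ⟨⟨a, b, rfl⟩, hab⟩
    exact ⟨(a, b), mem_hexPoints.mpr ((tri_mem_hexR_iff hk).mp hab), rfl⟩
  · rintro ⟨⟨a, b⟩, hab, rfl⟩
    exact ⟨⟨a, b, rfl⟩, (tri_mem_hexR_iff hk).mpr (mem_hexPoints.mp hab)⟩

open Pointwise in
theorem hexPoints_sub_hexPoints (k : ℤ) :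
    (hexPoints k : Set (ℤ × ℤ)) - hexPoints k = hexPoints (2 * k) := by
  ext ⟨x, y⟩
  simp only [Set.mem_sub, Finset.mem_coe, mem_hexPoints, abs_le]
  constructor
  · rintro ⟨p, hp, q, hq, hpq⟩
    simp only [Prod.ext_iff, Prod.fst_sub, Prod.snd_sub] at hpq
    omega
  · intro h
    -- rounding `x / 2` and `y / 2` in opposite directions keeps `p.1 + p.2` in range
    refine ⟨(x - x / 2, y / 2), ?_, (-(x / 2), y / 2 - y), ?_, ?_⟩
    · omega
    · omega
    · ext <;> simp

/-- All Löschian numbers up to `64` except `61` and `63`. -/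
def hexRFourSqDists : Finset ℤ :=
  {1, 3, 4, 7, 9, 12, 13, 16, 19, 21, 25, 27, 28, 31, 36, 37, 39, 43, 48, 49, 52, 57, 64}

set_option maxRecDepth 4000 in
theorem image_triNormSq_hexPoints_eight :
    ((hexPoints 8).erase 0).image triNormSq = hexRFourSqDists := by
  decide

theorem sqdSet_hexR_four :
    sqdSet (triLattice ∩ hexR 4) = ((↑) : ℤ → ℝ) '' hexRFourSqDists := by
  rw [triLattice_inter_hexR (by norm_num), sqdSet_image_tri, hexPoints_sub_hexPoints,
    ← Set.image_image, ← image_triNormSq_hexPoints_eight]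
  norm_num [Finset.coe_erase]

theorem hexagon_side4_twentythree_distance :
    (triLattice ∩ hexR 4).ncard = 61 ∧
      (sqdSet (triLattice ∩ hexR 4)).ncard = 23 ∧
      (64 : ℝ) ∈ sqdSet (triLattice ∩ hexR 4) ∧
      (61 : ℝ) ∉ sqdSet (triLattice ∩ hexR 4) ∧
      (63 : ℝ) ∉ sqdSet (triLattice ∩ hexR 4) := by
  have hcard : (hexPoints 4).card = 61 := by decide
  rw [sqdSet_hexR_four, triLattice_inter_hexR (by norm_num),
    Set.ncard_image_of_injective _ tri_injective_s8, Set.ncard_coe_finset, hcard,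
    Set.ncard_image_of_injective _ Int.cast_injective, Set.ncard_coe_finset]
  refine ⟨rfl, rfl, ?_, ?_, ?_⟩ <;> norm_num [hexRFourSqDists]
end

section
/- Every 25-point subset of the 27 lattice points of a (2,3)-equiangular hexagon in the triangular lattice determines at least 11 distinct distances. -/
/-! ### Auxiliary definitions and lemmas -/

/-- `tri` as a function on pairs. -/
noncomputable def triZ (v : ℤ × ℤ) : ℝ × ℝ := tri v.1 v.2

/-- Integer squared norm of the difference of two lattice coordinate pairs. -/
def nsq (u v : ℤ × ℤ) : ℤ :=
  (u.1 - v.1) ^ 2 + (u.1 - v.1) * (u.2 - v.2) + (u.2 - v.2) ^ 2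

/-- The 27 lattice coordinates of the (2,3)-equiangular hexagon. -/
def F : Finset (ℤ × ℤ) := {(0, 0), (1, 0), (2, 0), (-1, 1), (0, 1), (1, 1), (2, 1), (-2, 2), (-1, 2), (0, 2), (1, 2), (2, 2), (-3, 3), (-2, 3), (-1, 3), (0, 3), (1, 3), (2, 3), (-3, 4), (-2, 4), (-1, 4), (0, 4), (1, 4), (-3, 5), (-2, 5), (-1, 5), (0, 5)}

lemma sqd_triZ (u v : ℤ × ℤ) : sqd (triZ u) (triZ v) = ((nsq u v : ℤ) : ℝ) := by
  have h3 : Real.sqrt 3 * Real.sqrt 3 = 3 := Real.mul_self_sqrt (by norm_num)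
  simp only [sqd, triZ, tri, nsq]
  push_cast
  ring_nf
  linear_combination (((u.2 : ℝ) - v.2) ^ 2 / 4) * h3

lemma triZ_inj : Function.Injective triZ := by
  rintro ⟨a, b⟩ ⟨c, d⟩ h
  have hs : Real.sqrt 3 ≠ 0 := by positivity
  simp only [triZ, tri, Prod.mk.injEq] at h
  obtain ⟨h1, h2⟩ := h
  have hbd : (b : ℝ) = d := by
    have h0 : ((b : ℝ) - d) * Real.sqrt 3 = 0 := by linarith
    rcases mul_eq_zero.mp h0 with h0 | h0
    · linarith
    · exact absurd h0 hs
  have hb : b = d := by exact_mod_cast hbd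
  have ha : a = c := by
    rw [hbd] at h1
    have : (a : ℝ) = c := by linarith
    exact_mod_cast this
  simp [ha, hb]

lemma hull_le {V : Set (ℝ × ℝ)} (c1 c2 r : ℝ)
    (hv : ∀ q ∈ V, c1 * q.1 + c2 * q.2 ≤ r) {p} (hp : p ∈ convexHull ℝ V) :
    c1 * p.1 + c2 * p.2 ≤ r := by
  have hlin : IsLinearMap ℝ (fun q : ℝ × ℝ => c1 * q.1 + c2 * q.2) :=
    ⟨by intro x y; simp; ring, by intro c x; simp; ring⟩
  exact convexHull_min hv (convex_halfSpace_le hlin r) hp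

lemma mem_F_of_mem_hexE {a b : ℤ} (h : tri a b ∈ hexE 2) : (a, b) ∈ F := by
  have hs : (0:ℝ) < Real.sqrt 3 := Real.sqrt_pos.mpr (by norm_num)
  rw [hexE] at h
  have vtx : ∀ (c1 c2 r : ℝ),
      (∀ q ∈ ({tri 2 0, tri 2 (2+1), tri 0 (2*2+1), tri (-(2+1)) (2*2+1),
        tri (-(2+1)) (2+1), tri 0 0} : Set (ℝ × ℝ)), c1 * q.1 + c2 * q.2 ≤ r) →
      c1 * (tri a b).1 + c2 * (tri a b).2 ≤ r := fun c1 c2 r hv => hull_le c1 c2 r hv h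
  have h1 := vtx 0 (-1) 0 (by
    rintro q (rfl|rfl|rfl|rfl|rfl|rfl) <;> simp [tri] <;> nlinarith [Real.sqrt_nonneg 3])
  have h2 := vtx 0 1 (5 * Real.sqrt 3 / 2) (by
    rintro q (rfl|rfl|rfl|rfl|rfl|rfl) <;> simp [tri] <;> nlinarith [Real.sqrt_nonneg 3])
  have h3 := vtx (Real.sqrt 3) (-1) (2 * Real.sqrt 3) (by
    rintro q (rfl|rfl|rfl|rfl|rfl|rfl) <;> simp [tri] <;> nlinarith [Real.sqrt_nonneg 3])
  have h4 := vtx (-Real.sqrt 3) 1 (3 * Real.sqrt 3) (by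
    rintro q (rfl|rfl|rfl|rfl|rfl|rfl) <;> simp [tri] <;> nlinarith [Real.sqrt_nonneg 3])
  have h5 := vtx (Real.sqrt 3) 1 (5 * Real.sqrt 3) (by
    rintro q (rfl|rfl|rfl|rfl|rfl|rfl) <;> simp [tri] <;> nlinarith [Real.sqrt_nonneg 3])
  have h6 := vtx (-Real.sqrt 3) (-1) 0 (by
    rintro q (rfl|rfl|rfl|rfl|rfl|rfl) <;> simp [tri] <;> nlinarith [Real.sqrt_nonneg 3])
  simp only [tri] at h1 h2 h3 h4 h5 h6
  have hb0 : (0:ℤ) ≤ b := by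
    have : Real.sqrt 3 * 0 ≤ Real.sqrt 3 * (b:ℝ) := by linarith
    exact_mod_cast le_of_mul_le_mul_left this hs
  have hb5 : b ≤ 5 := by
    have : Real.sqrt 3 * (b:ℝ) ≤ Real.sqrt 3 * 5 := by linarith
    exact_mod_cast le_of_mul_le_mul_left this hs
  have ha2 : a ≤ 2 := by
    have : Real.sqrt 3 * (a:ℝ) ≤ Real.sqrt 3 * 2 := by linarith
    exact_mod_cast le_of_mul_le_mul_left this hs
  have ha3 : -3 ≤ a := by
    have : Real.sqrt 3 * (-3:ℝ) ≤ Real.sqrt 3 * (a:ℝ) := by linarith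
    exact_mod_cast le_of_mul_le_mul_left this hs
  have hab0 : 0 ≤ a + b := by
    have : Real.sqrt 3 * (0:ℝ) ≤ Real.sqrt 3 * ((a:ℝ) + b) := by linarith
    have h' := le_of_mul_le_mul_left this hs
    exact_mod_cast h'
  have hab5 : a + b ≤ 5 := by
    have : Real.sqrt 3 * ((a:ℝ) + b) ≤ Real.sqrt 3 * 5 := by linarith
    have h' := le_of_mul_le_mul_left this hs
    exact_mod_cast h'
  interval_cases a <;> interval_cases b <;> first | decide | omega

/-- Among three pairwise-disjoint pairs, one avoids both `x` and `y`. -/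
lemma choose_pair {α : Type*} {x y u1 v1 u2 v2 u3 v3 : α}
    (h : u1 ≠ u2 ∧ u1 ≠ v2 ∧ v1 ≠ u2 ∧ v1 ≠ v2 ∧ u1 ≠ u3 ∧ u1 ≠ v3 ∧ v1 ≠ u3 ∧ v1 ≠ v3 ∧
      u2 ≠ u3 ∧ u2 ≠ v3 ∧ v2 ≠ u3 ∧ v2 ≠ v3) :
    (u1 ≠ x ∧ u1 ≠ y ∧ v1 ≠ x ∧ v1 ≠ y) ∨ (u2 ≠ x ∧ u2 ≠ y ∧ v2 ≠ x ∧ v2 ≠ y) ∨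
    (u3 ≠ x ∧ u3 ≠ y ∧ v3 ≠ x ∧ v3 ≠ y) := by
  by_contra hc
  simp only [not_or, not_and_or, not_not, ne_eq] at hc
  obtain ⟨hc1, hc2, hc3⟩ := hc
  rcases hc1 with rfl|rfl|rfl|rfl <;> rcases hc2 with rfl|rfl|rfl|rfl <;>
    rcases hc3 with rfl|rfl|rfl|rfl <;> simp_all

theorem erdos_fishburn_25_point_set_not_ten_distance (Y : Set (ℝ × ℝ))
    (hY : Y ⊆ triLattice ∩ hexE 2) (hcard : Y.ncard = 25) :
    11 ≤ (sqdSet Y).ncard := by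
  -- Y consists of lattice points of the hexagon
  have hYF : Y ⊆ triZ '' ↑F := by
    intro p hp
    obtain ⟨hl, hh⟩ := hY hp
    obtain ⟨a, b, rfl⟩ := hl
    exact ⟨(a, b), mem_F_of_mem_hexE hh, rfl⟩
  set T : Set (ℤ × ℤ) := triZ ⁻¹' Y ∩ ↑F with hTdef
  have hgT : triZ '' T = Y := by
    apply Set.Subset.antisymm
    · rintro _ ⟨v, ⟨hv1, _⟩, rfl⟩; exact hv1
    · intro p hp
      obtain ⟨v, hvF, rfl⟩ := hYF hp
      exact ⟨v, ⟨hp, hvF⟩, rfl⟩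
  have hTF : T ⊆ ↑F := Set.inter_subset_right
  have hTcard : T.ncard = 25 := by
    rw [← Set.ncard_image_of_injective T triZ_inj, hgT, hcard]
  have hFfin : (↑F : Set (ℤ × ℤ)).Finite := F.finite_toSet
  have hM : ((↑F : Set (ℤ × ℤ)) \ T).ncard = 2 := by
    rw [Set.ncard_diff hTF (hFfin.subset hTF), hTcard, Set.ncard_coe_finset]
    rfl
  obtain ⟨x, y, hxy, hMxy⟩ := Set.ncard_eq_two.mp hM
  have hTmem : ∀ v ∈ F, v ≠ x → v ≠ y → triZ v ∈ Y := by
    intro v hv hvx hvy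
    have hvT : v ∈ T := by
      by_contra hvT
      have hmem : v ∈ (↑F : Set (ℤ × ℤ)) \ T := ⟨hv, hvT⟩
      rw [hMxy] at hmem
      rcases hmem with rfl | rfl
      · exact hvx rfl
      · exact hvy rfl
    rw [← hgT]
    exact ⟨v, hvT, rfl⟩
  -- each of the 11 distances, realized by 3 disjoint pairs, survives
  have hmem : ∀ (d : ℤ) (u1 v1 u2 v2 u3 v3 : ℤ × ℤ), u1 ∈ F → v1 ∈ F → u2 ∈ F → v2 ∈ F →
      u3 ∈ F → v3 ∈ F → u1 ≠ v1 → u2 ≠ v2 → u3 ≠ v3 →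
      (u1 ≠ u2 ∧ u1 ≠ v2 ∧ v1 ≠ u2 ∧ v1 ≠ v2 ∧ u1 ≠ u3 ∧ u1 ≠ v3 ∧ v1 ≠ u3 ∧ v1 ≠ v3 ∧
        u2 ≠ u3 ∧ u2 ≠ v3 ∧ v2 ≠ u3 ∧ v2 ≠ v3) →
      nsq u1 v1 = d → nsq u2 v2 = d → nsq u3 v3 = d → ((d : ℤ) : ℝ) ∈ sqdSet Y := by
    intro d u1 v1 u2 v2 u3 v3 hu1 hv1 hu2 hv2 hu3 hv3 n1 n2 n3 hdist e1 e2 e3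
    rcases choose_pair (x := x) (y := y) hdist with ⟨ha, hb, hc, hd⟩ | ⟨ha, hb, hc, hd⟩ |
      ⟨ha, hb, hc, hd⟩
    · exact ⟨triZ u1, hTmem u1 hu1 ha hb, triZ v1, hTmem v1 hv1 hc hd,
        fun hq => n1 (triZ_inj hq), by rw [sqd_triZ, e1]⟩
    · exact ⟨triZ u2, hTmem u2 hu2 ha hb, triZ v2, hTmem v2 hv2 hc hd,
        fun hq => n2 (triZ_inj hq), by rw [sqd_triZ, e2]⟩
    · exact ⟨triZ u3, hTmem u3 hu3 ha hb, triZ v3, hTmem v3 hv3 hc hd,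
        fun hq => n3 (triZ_inj hq), by rw [sqd_triZ, e3]⟩
  -- the 11 distances as a subset of sqdSet Y
  have hcast : Function.Injective (fun n : ℤ => (n : ℝ)) := fun m n h => by simpa using h
  have hsub : (fun n : ℤ => (n : ℝ)) ''
      ↑({1, 3, 4, 7, 9, 12, 13, 16, 19, 21, 25} : Finset ℤ) ⊆ sqdSet Y := by
    rintro _ ⟨n, hn, rfl⟩
    simp only [Finset.coe_insert, Set.mem_insert_iff, Finset.coe_singleton,
      Set.mem_singleton_iff] at hn
    rcases hn with rfl|rfl|rfl|rfl|rfl|rfl|rfl|rfl|rfl|rfl|rfl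
    · exact hmem 1 (0, 0) (1, 0) (2, 0) (1, 1) (-1, 1) (0, 1) (by decide) (by decide) (by decide) (by decide) (by decide) (by decide) (by decide) (by decide) (by decide) (by decide) (by decide) (by decide) (by decide)
    · exact hmem 3 (0, 0) (1, 1) (1, 0) (-1, 1) (2, 0) (0, 1) (by decide) (by decide) (by decide) (by decide) (by decide) (by decide) (by decide) (by decide) (by decide) (by decide) (by decide) (by decide) (by decide)
    · exact hmem 4 (0, 0) (2, 0) (1, 0) (-1, 2) (-1, 1) (1, 1) (by decide) (by decide) (by decide) (by decide) (by decide) (by decide) (by decide) (by decide) (by decide) (by decide) (by decide) (by decide) (by decide)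
    · exact hmem 7 (0, 0) (2, 1) (1, 0) (-2, 2) (2, 0) (-1, 1) (by decide) (by decide) (by decide) (by decide) (by decide) (by decide) (by decide) (by decide) (by decide) (by decide) (by decide) (by decide) (by decide)
    · exact hmem 9 (0, 0) (-3, 3) (1, 0) (-2, 3) (2, 0) (-1, 3) (by decide) (by decide) (by decide) (by decide) (by decide) (by decide) (by decide) (by decide) (by decide) (by decide) (by decide) (by decide) (by decide)
    · exact hmem 12 (0, 0) (2, 2) (1, 0) (-1, 4) (2, 0) (-2, 2) (by decide) (by decide) (by decide) (by decide) (by decide) (by decide) (by decide) (by decide) (by decide) (by decide) (by decide) (by decide) (by decide)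
    · exact hmem 13 (0, 0) (1, 3) (1, 0) (-3, 3) (2, 0) (-2, 3) (by decide) (by decide) (by decide) (by decide) (by decide) (by decide) (by decide) (by decide) (by decide) (by decide) (by decide) (by decide) (by decide)
    · exact hmem 16 (0, 0) (0, 4) (1, 0) (-3, 4) (2, 0) (-2, 4) (by decide) (by decide) (by decide) (by decide) (by decide) (by decide) (by decide) (by decide) (by decide) (by decide) (by decide) (by decide) (by decide)
    · exact hmem 19 (0, 0) (2, 3) (1, 0) (-2, 5) (2, 0) (-3, 3) (by decide) (by decide) (by decide) (by decide) (by decide) (by decide) (by decide) (by decide) (by decide) (by decide) (by decide) (by decide) (by decide)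
    · exact hmem 21 (0, 0) (1, 4) (1, 0) (-3, 5) (2, 0) (-3, 4) (by decide) (by decide) (by decide) (by decide) (by decide) (by decide) (by decide) (by decide) (by decide) (by decide) (by decide) (by decide) (by decide)
    · exact hmem 25 (0, 0) (0, 5) (2, 0) (-3, 5) (-3, 3) (2, 3) (by decide) (by decide) (by decide) (by decide) (by decide) (by decide) (by decide) (by decide) (by decide) (by decide) (by decide) (by decide) (by decide)
  -- finiteness of the distance set
  have hYfin : Y.Finite := (hFfin.image triZ).subset hYF
  have hsfin : (sqdSet Y).Finite := by
    have hss : sqdSet Y ⊆ (fun pq : (ℝ × ℝ) × (ℝ × ℝ) => sqd pq.1 pq.2) '' (Y ×ˢ Y) := by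
      rintro d ⟨p, hp, q, hq, _, rfl⟩
      exact ⟨(p, q), ⟨hp, hq⟩, rfl⟩
    exact ((hYfin.prod hYfin).image _).subset hss
  have hc11 : ((fun n : ℤ => (n : ℝ)) ''
      ↑({1, 3, 4, 7, 9, 12, 13, 16, 19, 21, 25} : Finset ℤ)).ncard = 11 := by
    rw [Set.ncard_image_of_injective _ hcast, Set.ncard_coe_finset]
    rfl
  calc 11 = ((fun n : ℤ => (n : ℝ)) ''
      ↑({1, 3, 4, 7, 9, 12, 13, 16, 19, 21, 25} : Finset ℤ)).ncard := hc11.symm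
    _ ≤ (sqdSet Y).ncard := Set.ncard_le_ncard hsub hsfin
end
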